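/- arXiv:math/0111303 — 13 statements merged into one kernel-verified Lean document; each statement's English description precedes it below -/
import Mathlib

section
/- Let (a1,a2,a3,a4,a5) = (2,3,11,17,23). For every vector p = (p1,...,p5) of nonnegative integers with p1+p2+p3+p4+p5 ≥ 2 (equivalently, p is neither zero nor a standard basis vector), one has p1+p2+p3+p4+p5 ≥ min(2·p1, 3·p2, 11·p3, 17·p4, 23·p5) + 2; equivalently, the toric discrepancy a_p = Σ_i p_i − min_i(a_i·p_i) − 1 is at least 1. -/
/-!
Let `m` be the minimum of the `aᵢ pᵢ`, so that `pᵢ ≥ ⌈m / aᵢ⌉`. For `m = 0` the claim is the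
hypothesis `∑ pᵢ ≥ 2`. Otherwise, since `1/2 + 1/3 + 1/11 + 1/17 + 1/23 = 26491/25806 > 1`, the
sum `∑ m / aᵢ` exceeds `m` by `685 m / 25806`, which is at least `2` once `m ≥ 76`; the finitely
many `1 ≤ m ≤ 75` are settled by evaluating `∑ ⌈m / aᵢ⌉`.
-/

theorem add_two_le_sum_ceilDiv_of_lt_76 :
    ∀ m < 76, 0 < m → m + 2 ≤ m ⌈/⌉ 2 + m ⌈/⌉ 3 + m ⌈/⌉ 11 + m ⌈/⌉ 17 + m ⌈/⌉ 23 := by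
  decide

theorem add_two_le_sum_of_le_mul {m p₁ p₂ p₃ p₄ p₅ : ℕ} (hm : 0 < m)
    (h₁ : m ≤ 2 * p₁) (h₂ : m ≤ 3 * p₂) (h₃ : m ≤ 11 * p₃) (h₄ : m ≤ 17 * p₄)
    (h₅ : m ≤ 23 * p₅) : m + 2 ≤ p₁ + p₂ + p₃ + p₄ + p₅ := by
  rcases lt_or_ge m 76 with hsmall | hlarge
  · have hceil := add_two_le_sum_ceilDiv_of_lt_76 m hsmall hm
    have c₁ : m ⌈/⌉ 2 ≤ p₁ := (ceilDiv_le_iff_le_smul (by norm_num)).2 h₁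
    have c₂ : m ⌈/⌉ 3 ≤ p₂ := (ceilDiv_le_iff_le_smul (by norm_num)).2 h₂
    have c₃ : m ⌈/⌉ 11 ≤ p₃ := (ceilDiv_le_iff_le_smul (by norm_num)).2 h₃
    have c₄ : m ⌈/⌉ 17 ≤ p₄ := (ceilDiv_le_iff_le_smul (by norm_num)).2 h₄
    have c₅ : m ⌈/⌉ 23 ≤ p₅ := (ceilDiv_le_iff_le_smul (by norm_num)).2 h₅
    omega
  · refine Nat.le_of_mul_le_mul_left ?_ (show 0 < 25806 by norm_num)
    calc 25806 * (m + 2)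
        ≤ 26491 * m := by omega
      _ = 12903 * m + 8602 * m + 2346 * m + 1518 * m + 1122 * m := by ring
      _ ≤ 12903 * (2 * p₁) + 8602 * (3 * p₂) + 2346 * (11 * p₃) + 1518 * (17 * p₄)
            + 1122 * (23 * p₅) := by gcongr
      _ = 25806 * (p₁ + p₂ + p₃ + p₄ + p₅) := by ring

theorem toric_discrepancy_2_3_11_17_23
    (p₁ p₂ p₃ p₄ p₅ : ℕ) (h : 2 ≤ p₁ + p₂ + p₃ + p₄ + p₅) :
    min (min (min (min (2 * p₁) (3 * p₂)) (11 * p₃)) (17 * p₄)) (23 * p₅) + 2 ≤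
      p₁ + p₂ + p₃ + p₄ + p₅ := by
  set m := min (min (min (min (2 * p₁) (3 * p₂)) (11 * p₃)) (17 * p₄)) (23 * p₅)
  rcases Nat.eq_zero_or_pos m with hzero | hpos
  · simpa [hzero] using h
  · exact add_two_le_sum_of_le_mul hpos (by omega) (by omega) (by omega) (by omega) (by omega)
end

section
/- Let (a1,a2,a3,a4,a5) = (2,3,11,17,25). For every vector p = (p1,...,p5) of nonnegative integers with p1+p2+p3+p4+p5 ≥ 2 (equivalently, p is neither zero nor a standard basis vector), one has p1+p2+p3+p4+p5 ≥ min(2·p1, 3·p2, 11·p3, 17·p4, 25·p5) + 2; equivalently, the toric discrepancy a_p = Σ_i p_i − min_i(a_i·p_i) − 1 is at least 1. -/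
/-!
Put `m = min(2p₁, 3p₂, 11p₃, 17p₄, 25p₅)`. If `m = 0` the claim is the hypothesis. Otherwise
`pᵢ ≥ ⌈m / aᵢ⌉` for every `i`, so it suffices that `Σ ⌈m / aᵢ⌉ ≥ m + 2` for every `m ≥ 1`.
Since `1/2 + 1/3 + 1/11 + 1/17 + 1/25 = 1 + 647/28050`, the integer `Σ ⌈m / aᵢ⌉` is at least
`Σ m / aᵢ > m + 1` once `m ≥ 44`; the remaining values `1 ≤ m < 44` are checked one by one.
-/

def ceilDivSum (m : ℕ) : ℕ :=
  m ⌈/⌉ 2 + m ⌈/⌉ 3 + m ⌈/⌉ 11 + m ⌈/⌉ 17 + m ⌈/⌉ 25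

lemma ceilDivSum_le_of_le_mul {m p₁ p₂ p₃ p₄ p₅ : ℕ} (h₁ : m ≤ 2 * p₁) (h₂ : m ≤ 3 * p₂)
    (h₃ : m ≤ 11 * p₃) (h₄ : m ≤ 17 * p₄) (h₅ : m ≤ 25 * p₅) :
    ceilDivSum m ≤ p₁ + p₂ + p₃ + p₄ + p₅ := by
  unfold ceilDivSum
  gcongr
  · exact (ceilDiv_le_iff_le_mul (by norm_num)).2 h₁
  · exact (ceilDiv_le_iff_le_mul (by norm_num)).2 h₂
  · exact (ceilDiv_le_iff_le_mul (by norm_num)).2 h₃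
  · exact (ceilDiv_le_iff_le_mul (by norm_num)).2 h₄
  · exact (ceilDiv_le_iff_le_mul (by norm_num)).2 h₅

lemma add_two_le_ceilDivSum_of_ge {m : ℕ} (hm : 44 ≤ m) : m + 2 ≤ ceilDivSum m := by
  have h₁ : m ≤ 2 * (m ⌈/⌉ 2) := le_smul_ceilDiv (by norm_num : 0 < 2)
  have h₂ : m ≤ 3 * (m ⌈/⌉ 3) := le_smul_ceilDiv (by norm_num : 0 < 3)
  have h₃ : m ≤ 11 * (m ⌈/⌉ 11) := le_smul_ceilDiv (by norm_num : 0 < 11)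
  have h₄ : m ≤ 17 * (m ⌈/⌉ 17) := le_smul_ceilDiv (by norm_num : 0 < 17)
  have h₅ : m ≤ 25 * (m ⌈/⌉ 25) := le_smul_ceilDiv (by norm_num : 0 < 25)
  unfold ceilDivSum
  omega

lemma add_two_le_ceilDivSum {m : ℕ} (hm : 1 ≤ m) : m + 2 ≤ ceilDivSum m := by
  rcases lt_or_ge m 44 with hsmall | hlarge
  · have hcheck : ∀ k < 44, 1 ≤ k → k + 2 ≤ ceilDivSum k := by decide
    exact hcheck m hsmall hm
  · exact add_two_le_ceilDivSum_of_ge hlarge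

theorem toric_discrepancy_2_3_11_17_25
    (p₁ p₂ p₃ p₄ p₅ : ℕ) (h : 2 ≤ p₁ + p₂ + p₃ + p₄ + p₅) :
    min (min (min (min (2 * p₁) (3 * p₂)) (11 * p₃)) (17 * p₄)) (25 * p₅) + 2 ≤
      p₁ + p₂ + p₃ + p₄ + p₅ := by
  set m := min (min (min (min (2 * p₁) (3 * p₂)) (11 * p₃)) (17 * p₄)) (25 * p₅) with hm
  obtain ⟨⟨⟨⟨h₁, h₂⟩, h₃⟩, h₄⟩, h₅⟩ : (((m ≤ 2 * p₁ ∧ m ≤ 3 * p₂) ∧ m ≤ 11 * p₃) ∧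
      m ≤ 17 * p₄) ∧ m ≤ 25 * p₅ := by
    simpa only [le_min_iff] using hm.le
  rcases Nat.eq_zero_or_pos m with hzero | hpos
  · rwa [hzero]
  · exact (add_two_le_ceilDivSum hpos).trans (ceilDivSum_le_of_le_mul h₁ h₂ h₃ h₄ h₅)
end

section
/- Let (a1,a2,a3,a4,a5) = (2,3,11,17,29). For every vector p = (p1,...,p5) of nonnegative integers with p1+p2+p3+p4+p5 ≥ 2 (equivalently, p is neither zero nor a standard basis vector), one has p1+p2+p3+p4+p5 ≥ min(2·p1, 3·p2, 11·p3, 17·p4, 29·p5) + 2; equivalently, the toric discrepancy a_p = Σ_i p_i − min_i(a_i·p_i) − 1 is at least 1. -/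
/-!
Put `m = minᵢ aᵢ pᵢ`. If `m = 0` the claim is the hypothesis `2 ≤ ∑ pᵢ`. Otherwise
`pᵢ ≥ ⌈m / aᵢ⌉` for every `i`, so it suffices that `∑ᵢ ⌈m / aᵢ⌉ ≥ m + 2` for all `m ≥ 1`.
For `(2, 3, 11, 17, 29)` one has `∑ᵢ 1 / aᵢ = 1 + 571 / 32538`, so already `∑ᵢ m / aᵢ ≥ m + 2`
once `m ≥ 114`; the finitely many smaller `m` are checked directly.
-/

theorem le_mul_ceilDiv {a : ℕ} (ha : 0 < a) (b : ℕ) : b ≤ a * (b ⌈/⌉ a) :=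
  (ceilDiv_le_iff_le_mul ha).1 le_rfl

theorem ceilDiv_le_of_le_mul {m a p : ℕ} (hm : 0 < m) (h : m ≤ a * p) : m ⌈/⌉ a ≤ p :=
  (ceilDiv_le_iff_le_mul (Nat.pos_of_ne_zero (by rintro rfl; omega))).2 h

theorem min_add_two_le_sum_of_forall_add_two_le_sum_ceilDiv {a₁ a₂ a₃ a₄ a₅ : ℕ}
    (hcrit : ∀ m, 0 < m → m + 2 ≤ m ⌈/⌉ a₁ + m ⌈/⌉ a₂ + m ⌈/⌉ a₃ + m ⌈/⌉ a₄ + m ⌈/⌉ a₅)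
    {p₁ p₂ p₃ p₄ p₅ : ℕ} (h : 2 ≤ p₁ + p₂ + p₃ + p₄ + p₅) :
    min (min (min (min (a₁ * p₁) (a₂ * p₂)) (a₃ * p₃)) (a₄ * p₄)) (a₅ * p₅) + 2 ≤
      p₁ + p₂ + p₃ + p₄ + p₅ := by
  set m := min (min (min (min (a₁ * p₁) (a₂ * p₂)) (a₃ * p₃)) (a₄ * p₄)) (a₅ * p₅)
  rcases Nat.eq_zero_or_pos m with hzero | hpos
  · omega
  have h₁ : m ⌈/⌉ a₁ ≤ p₁ := ceilDiv_le_of_le_mul hpos (by omega)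
  have h₂ : m ⌈/⌉ a₂ ≤ p₂ := ceilDiv_le_of_le_mul hpos (by omega)
  have h₃ : m ⌈/⌉ a₃ ≤ p₃ := ceilDiv_le_of_le_mul hpos (by omega)
  have h₄ : m ⌈/⌉ a₄ ≤ p₄ := ceilDiv_le_of_le_mul hpos (by omega)
  have h₅ : m ⌈/⌉ a₅ ≤ p₅ := ceilDiv_le_of_le_mul hpos (by omega)
  have := hcrit m hpos
  omega

theorem add_two_le_sum_ceilDiv_2_3_11_17_29 {m : ℕ} (hm : 0 < m) :
    m + 2 ≤ m ⌈/⌉ 2 + m ⌈/⌉ 3 + m ⌈/⌉ 11 + m ⌈/⌉ 17 + m ⌈/⌉ 29 := by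
  rcases lt_or_ge m 114 with hsmall | hlarge
  · interval_cases m <;> decide
  · have h₂ := le_mul_ceilDiv (a := 2) (by norm_num) m
    have h₃ := le_mul_ceilDiv (a := 3) (by norm_num) m
    have h₁₁ := le_mul_ceilDiv (a := 11) (by norm_num) m
    have h₁₇ := le_mul_ceilDiv (a := 17) (by norm_num) m
    have h₂₉ := le_mul_ceilDiv (a := 29) (by norm_num) m
    omega

theorem toric_discrepancy_2_3_11_17_29
    (p₁ p₂ p₃ p₄ p₅ : ℕ) (h : 2 ≤ p₁ + p₂ + p₃ + p₄ + p₅) :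
    min (min (min (min (2 * p₁) (3 * p₂)) (11 * p₃)) (17 * p₄)) (29 * p₅) + 2 ≤
      p₁ + p₂ + p₃ + p₄ + p₅ :=
  min_add_two_le_sum_of_forall_add_two_le_sum_ceilDiv
    (fun _ hm => add_two_le_sum_ceilDiv_2_3_11_17_29 hm) h
end

section
/- Let (a1,a2,a3,a4,a5) = (2,5,7,9,11). For every vector p = (p1,...,p5) of nonnegative integers with p1+p2+p3+p4+p5 ≥ 2 (equivalently, p is neither zero nor a standard basis vector), one has p1+p2+p3+p4+p5 ≥ min(2·p1, 5·p2, 7·p3, 9·p4, 11·p5) + 2; equivalently, the toric discrepancy a_p = Σ_i p_i − min_i(a_i·p_i) − 1 is at least 1. -/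
/-!
Put `m = minᵢ aᵢ pᵢ` with `(a₁, …, a₅) = (2, 5, 7, 9, 11)`. For `m = 0` the claim is the
hypothesis. Otherwise `m ≤ aᵢ pᵢ` forces `pᵢ ≥ ⌈m / aᵢ⌉`, so it suffices that
`∑ᵢ ⌈m / aᵢ⌉ ≥ m + 2` for every `m ≥ 1`. As `∑ᵢ 1 / aᵢ = 7241 / 6930 > 1`, this already holds
without rounding once `311 m ≥ 2 · 6930`, i.e. for `m ≥ 45`; the values `m < 45` are checked
directly.
-/

lemma add_two_le_sum_ceilDiv_of_ge_45 {m : ℕ} (hm : 45 ≤ m) :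
    m + 2 ≤ m ⌈/⌉ 2 + m ⌈/⌉ 5 + m ⌈/⌉ 7 + m ⌈/⌉ 9 + m ⌈/⌉ 11 := by
  have hmul (a : ℕ) (ha : 0 < a) : m ≤ a * (m ⌈/⌉ a) := le_smul_ceilDiv ha
  have h₂ := hmul 2 (by norm_num)
  have h₅ := hmul 5 (by norm_num)
  have h₇ := hmul 7 (by norm_num)
  have h₉ := hmul 9 (by norm_num)
  have h₁₁ := hmul 11 (by norm_num)
  omega

lemma add_two_le_sum_ceilDiv {m : ℕ} (hm : 1 ≤ m) :
    m + 2 ≤ m ⌈/⌉ 2 + m ⌈/⌉ 5 + m ⌈/⌉ 7 + m ⌈/⌉ 9 + m ⌈/⌉ 11 := by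
  rcases lt_or_ge m 45 with hsmall | hlarge
  · have hcheck : ∀ k < 45, 1 ≤ k →
        k + 2 ≤ k ⌈/⌉ 2 + k ⌈/⌉ 5 + k ⌈/⌉ 7 + k ⌈/⌉ 9 + k ⌈/⌉ 11 := by
      decide
    exact hcheck m hsmall hm
  · exact add_two_le_sum_ceilDiv_of_ge_45 hlarge

theorem toric_discrepancy_2_5_7_9_11
    (p₁ p₂ p₃ p₄ p₅ : ℕ) (h : 2 ≤ p₁ + p₂ + p₃ + p₄ + p₅) :
    min (min (min (min (2 * p₁) (5 * p₂)) (7 * p₃)) (9 * p₄)) (11 * p₅) + 2 ≤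
      p₁ + p₂ + p₃ + p₄ + p₅ := by
  set m := min (min (min (min (2 * p₁) (5 * p₂)) (7 * p₃)) (9 * p₄)) (11 * p₅)
  rcases Nat.eq_zero_or_pos m with hm | hm
  · omega
  have hceil (a p : ℕ) (ha : 0 < a) (hap : m ≤ a * p) : m ⌈/⌉ a ≤ p :=
    (ceilDiv_le_iff_le_mul ha).2 hap
  have h₂ := hceil 2 p₁ (by norm_num) (by omega)
  have h₅ := hceil 5 p₂ (by norm_num) (by omega)
  have h₇ := hceil 7 p₃ (by norm_num) (by omega)
  have h₉ := hceil 9 p₄ (by norm_num) (by omega)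
  have h₁₁ := hceil 11 p₅ (by norm_num) (by omega)
  have hsum := add_two_le_sum_ceilDiv hm
  omega
end

section
/- For every integer d ≥ 1, ⌈d/2⌉ + ⌈d/3⌉ + ⌈d/11⌉ + ⌈d/17⌉ + ⌈d/19⌉ ≥ d + 2. -/
/-!
Since `1/2 + 1/3 + 1/11 + 1/17 + 1/19 = 1 + 761/21318`, the bound `⌈d/a⌉ ≥ d/a` already gives
`d + 2` once `761 d ≥ 2 · 21318`, i.e. for `d ≥ 57`; the values `1 ≤ d ≤ 56` are checked directly.
-/

lemma ceil_sum_ge_2_3_11_17_19_of_le_56 (d : ℤ) (hd : 1 ≤ d) (hd' : d ≤ 56) :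
    d + 2 ≤ ⌈(d : ℚ) / 2⌉ + ⌈(d : ℚ) / 3⌉ + ⌈(d : ℚ) / 11⌉ + ⌈(d : ℚ) / 17⌉ + ⌈(d : ℚ) / 19⌉ := by
  interval_cases d <;> norm_num

lemma ceil_sum_ge_2_3_11_17_19_of_57_le (d : ℤ) (hd : 57 ≤ d) :
    d + 2 ≤ ⌈(d : ℚ) / 2⌉ + ⌈(d : ℚ) / 3⌉ + ⌈(d : ℚ) / 11⌉ + ⌈(d : ℚ) / 17⌉ + ⌈(d : ℚ) / 19⌉ := by
  have hdQ : (57 : ℚ) ≤ d := by exact_mod_cast hd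
  suffices (d + 2 : ℚ) ≤ ⌈(d : ℚ) / 2⌉ + ⌈(d : ℚ) / 3⌉ + ⌈(d : ℚ) / 11⌉ + ⌈(d : ℚ) / 17⌉ +
      ⌈(d : ℚ) / 19⌉ by exact_mod_cast this
  calc (d + 2 : ℚ) ≤ d / 2 + d / 3 + d / 11 + d / 17 + d / 19 := by linarith
    _ ≤ _ := by gcongr <;> exact Int.le_ceil _

theorem ceil_sum_ge_2_3_11_17_19 (d : ℤ) (hd : 1 ≤ d) :
    d + 2 ≤ ⌈(d : ℚ) / 2⌉ + ⌈(d : ℚ) / 3⌉ + ⌈(d : ℚ) / 11⌉ + ⌈(d : ℚ) / 17⌉ + ⌈(d : ℚ) / 19⌉ := by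
  rcases le_or_gt d 56 with hsmall | hlarge
  · exact ceil_sum_ge_2_3_11_17_19_of_le_56 d hd hsmall
  · exact ceil_sum_ge_2_3_11_17_19_of_57_le d hlarge
end

section
/- For every integer d ≥ 1, ⌈d/2⌉ + ⌈d/3⌉ + ⌈d/11⌉ + ⌈d/17⌉ + ⌈d/23⌉ ≥ d + 2. -/
/-!
Since `⌈x⌉ ≥ x`, the sum is at least `d (1/2 + 1/3 + 1/11 + 1/17 + 1/23) = d + 685 d / 25806`,
which exceeds `d + 1` as soon as `d ≥ 38`; an integer exceeding `d + 1` is at least `d + 2`.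
The finitely many remaining values `1 ≤ d ≤ 37` are checked by evaluating the ceilings.
-/

theorem add_two_le_sum_ceil_div_of_ge_38 {K : Type*} [Field K] [LinearOrder K]
    [IsStrictOrderedRing K] [FloorRing K] (d : ℤ) (hd : 38 ≤ d) :
    d + 2 ≤ ⌈(d : K) / 2⌉ + ⌈(d : K) / 3⌉ + ⌈(d : K) / 11⌉ + ⌈(d : K) / 17⌉ + ⌈(d : K) / 23⌉ := by
  have hd' : (38 : K) ≤ d := mod_cast hd
  rw [show d + 2 = d + 1 + 1 by ring, ← Int.lt_iff_add_one_le, ← Int.cast_lt (R := K)]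
  push_cast
  linarith [Int.le_ceil ((d : K) / 2), Int.le_ceil ((d : K) / 3), Int.le_ceil ((d : K) / 11),
    Int.le_ceil ((d : K) / 17), Int.le_ceil ((d : K) / 23)]

theorem ceil_sum_ge_2_3_11_17_23 (d : ℤ) (hd : 1 ≤ d) :
    d + 2 ≤ ⌈(d : ℚ) / 2⌉ + ⌈(d : ℚ) / 3⌉ + ⌈(d : ℚ) / 11⌉ + ⌈(d : ℚ) / 17⌉ + ⌈(d : ℚ) / 23⌉ := by
  rcases lt_or_ge d 38 with hsmall | hlarge
  · interval_cases d <;> norm_num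
  · exact add_two_le_sum_ceil_div_of_ge_38 d hlarge
end

section
/- For every integer d ≥ 1, ⌈d/2⌉ + ⌈d/3⌉ + ⌈d/11⌉ + ⌈d/17⌉ + ⌈d/25⌉ ≥ d + 2. -/
/-!
Since 1/2 + 1/3 + 1/11 + 1/17 + 1/25 = 1 + 647/28050, dropping the ceilings already gives
the bound as soon as 647 d ≥ 2 · 28050, i.e. for d ≥ 87. The remaining values 1 ≤ d ≤ 86
are checked one by one.
-/

lemma add_two_le_sum_ceil_div_of_87_le {d : ℚ} (hd : 87 ≤ d) :
    d + 2 ≤ ((⌈d / 2⌉ + ⌈d / 3⌉ + ⌈d / 11⌉ + ⌈d / 17⌉ + ⌈d / 25⌉ : ℤ) : ℚ) := by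
  push_cast
  linarith [Int.le_ceil (d / 2), Int.le_ceil (d / 3), Int.le_ceil (d / 11),
    Int.le_ceil (d / 17), Int.le_ceil (d / 25)]

lemma add_two_le_sum_ceil_div_of_le_86 {d : ℤ} (hd₁ : 1 ≤ d) (hd₈₆ : d ≤ 86) :
    d + 2 ≤ ⌈(d : ℚ) / 2⌉ + ⌈(d : ℚ) / 3⌉ + ⌈(d : ℚ) / 11⌉ + ⌈(d : ℚ) / 17⌉ +
      ⌈(d : ℚ) / 25⌉ := by
  interval_cases d <;> norm_num

theorem ceil_sum_ge_2_3_11_17_25 (d : ℤ) (hd : 1 ≤ d) :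
    d + 2 ≤ ⌈(d : ℚ) / 2⌉ + ⌈(d : ℚ) / 3⌉ + ⌈(d : ℚ) / 11⌉ + ⌈(d : ℚ) / 17⌉ + ⌈(d : ℚ) / 25⌉ := by
  rcases le_or_gt d 86 with hsmall | hlarge
  · exact add_two_le_sum_ceil_div_of_le_86 hd hsmall
  · have h87 : (87 : ℚ) ≤ d := by exact_mod_cast hlarge
    exact_mod_cast add_two_le_sum_ceil_div_of_87_le h87
end

section
/- For every integer d ≥ 1, ⌈d/2⌉ + ⌈d/3⌉ + ⌈d/11⌉ + ⌈d/17⌉ + ⌈d/29⌉ ≥ d + 2. -/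
/- `1/2 + 1/3 + 1/11 + 1/17 + 1/29 = 1 + 571/32538` and `571 * 114 ≥ 2 * 32538`, so `⌈x/a⌉ ≥ x/a`
already gives the bound for `x ≥ 114`. -/
theorem add_two_le_sum_ceil_div_of_114_le {α : Type*} [Field α] [LinearOrder α]
    [IsStrictOrderedRing α] [FloorRing α] (x : α) (hx : 114 ≤ x) :
    x + 2 ≤ ((⌈x / 2⌉ + ⌈x / 3⌉ + ⌈x / 11⌉ + ⌈x / 17⌉ + ⌈x / 29⌉ : ℤ) : α) := by
  push_cast
  linarith [Int.le_ceil (x / 2), Int.le_ceil (x / 3), Int.le_ceil (x / 11),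
    Int.le_ceil (x / 17), Int.le_ceil (x / 29)]

theorem add_two_le_sum_ceil_div_of_lt_114 (d : ℤ) (hd : 1 ≤ d) (h : d < 114) :
    d + 2 ≤ ⌈(d : ℚ) / 2⌉ + ⌈(d : ℚ) / 3⌉ + ⌈(d : ℚ) / 11⌉ + ⌈(d : ℚ) / 17⌉ + ⌈(d : ℚ) / 29⌉ := by
  interval_cases d <;> norm_num

theorem ceil_sum_ge_2_3_11_17_29 (d : ℤ) (hd : 1 ≤ d) :
    d + 2 ≤ ⌈(d : ℚ) / 2⌉ + ⌈(d : ℚ) / 3⌉ + ⌈(d : ℚ) / 11⌉ + ⌈(d : ℚ) / 17⌉ + ⌈(d : ℚ) / 29⌉ := by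
  rcases lt_or_ge d 114 with h | h
  · exact add_two_le_sum_ceil_div_of_lt_114 d hd h
  · exact_mod_cast add_two_le_sum_ceil_div_of_114_le (d : ℚ) (by exact_mod_cast h)
end

section
/- For every integer d ≥ 1, ⌈d/2⌉ + ⌈d/5⌉ + ⌈d/7⌉ + ⌈d/9⌉ + ⌈d/11⌉ ≥ d + 2. -/
/-!
Since `⌈x⌉ ≥ x`, the sum of the ceilings is at least `d (1/2 + 1/5 + 1/7 + 1/9 + 1/11) = d + 311 d / 6930`,
which is at least `d + 2` as soon as `d ≥ 45`; the remaining values `1 ≤ d ≤ 44` are checked by computation.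
-/

theorem add_le_sum_ceil_div_of_le {ι : Type*} (s : Finset ι) (a : ι → ℕ) (d k : ℤ)
    (hk : (k : ℚ) ≤ d * ((∑ i ∈ s, (1 : ℚ) / a i) - 1)) :
    d + k ≤ ∑ i ∈ s, ⌈(d : ℚ) / a i⌉ := by
  have hceil : (d : ℚ) * ∑ i ∈ s, (1 : ℚ) / a i ≤ ∑ i ∈ s, ⌈(d : ℚ) / a i⌉ := by
    rw [Finset.mul_sum]
    push_cast
    exact Finset.sum_le_sum fun i _ => (mul_one_div (d : ℚ) (a i)).symm ▸ Int.le_ceil _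
  have : ((d + k : ℤ) : ℚ) ≤ ∑ i ∈ s, ⌈(d : ℚ) / a i⌉ := by
    push_cast at hceil ⊢
    linarith
  exact_mod_cast this

theorem ceil_intCast_div_ofNat (d : ℤ) (n : ℕ) [n.AtLeastTwo] :
    ⌈(d : ℚ) / (ofNat(n) : ℚ)⌉ = -(-d / (ofNat(n) : ℤ)) := by
  simpa only [Nat.cast_ofNat] using Rat.ceil_intCast_div_natCast d (OfNat.ofNat n)

theorem ceil_sum_ge_2_5_7_9_11 (d : ℤ) (hd : 1 ≤ d) :
    d + 2 ≤ ⌈(d : ℚ) / 2⌉ + ⌈(d : ℚ) / 5⌉ + ⌈(d : ℚ) / 7⌉ + ⌈(d : ℚ) / 9⌉ + ⌈(d : ℚ) / 11⌉ := by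
  rcases le_or_gt 45 d with hlarge | hsmall
  · have hd45 : (45 : ℚ) ≤ d := by exact_mod_cast hlarge
    have hrecip : (2 : ℚ) ≤ d * ((∑ i, (1 : ℚ) / (![2, 5, 7, 9, 11] i : ℕ)) - 1) := by
      simp [Fin.sum_univ_five]
      linarith
    simpa [Fin.sum_univ_five, add_assoc] using
      add_le_sum_ceil_div_of_le Finset.univ ![2, 5, 7, 9, 11] d 2 hrecip
  · simp only [ceil_intCast_div_ofNat]
    interval_cases d <;> decide
end

section
/- For every integer d ≥ 1, ⌈d/2⌉ + ⌈d/5⌉ + ⌈d/7⌉ + ⌈d/9⌉ + ⌈d/13⌉ ≥ d + 2. -/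
/-! Since 1/2 + 1/5 + 1/7 + 1/9 + 1/13 = 1 + 253/8190, dropping the ceilings already gives
`d + 2` once `d ≥ 65`; the finitely many remaining `d` are checked directly. -/

theorem add_two_le_ceil_sum_of_le_64 (d : ℤ) (hd : 1 ≤ d) (hd64 : d ≤ 64) :
    d + 2 ≤ ⌈(d : ℚ) / 2⌉ + ⌈(d : ℚ) / 5⌉ + ⌈(d : ℚ) / 7⌉ + ⌈(d : ℚ) / 9⌉ + ⌈(d : ℚ) / 13⌉ := by
  interval_cases d <;> norm_num

theorem add_two_le_ceil_sum_of_65_le (d : ℤ) (hd : 65 ≤ d) :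
    d + 2 ≤ ⌈(d : ℚ) / 2⌉ + ⌈(d : ℚ) / 5⌉ + ⌈(d : ℚ) / 7⌉ + ⌈(d : ℚ) / 9⌉ + ⌈(d : ℚ) / 13⌉ := by
  have hq : (65 : ℚ) ≤ d := by exact_mod_cast hd
  rw [← Int.cast_le (R := ℚ)]
  push_cast
  linarith [Int.le_ceil ((d : ℚ) / 2), Int.le_ceil ((d : ℚ) / 5), Int.le_ceil ((d : ℚ) / 7),
    Int.le_ceil ((d : ℚ) / 9), Int.le_ceil ((d : ℚ) / 13)]

theorem ceil_sum_ge_2_5_7_9_13 (d : ℤ) (hd : 1 ≤ d) :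
    d + 2 ≤ ⌈(d : ℚ) / 2⌉ + ⌈(d : ℚ) / 5⌉ + ⌈(d : ℚ) / 7⌉ + ⌈(d : ℚ) / 9⌉ + ⌈(d : ℚ) / 13⌉ := by
  rcases le_or_gt d 64 with hd64 | hd65
  · exact add_two_le_ceil_sum_of_le_64 d hd hd64
  · exact add_two_le_ceil_sum_of_65_le d hd65
end

section
/- The integer 34 is the least positive integer n such that ⌊(n+1)·(1/2)⌋ + ⌊(n+1)·(2/3)⌋ + ⌊(n+1)·(10/11)⌋ + ⌊(n+1)·(16/17)⌋ + ⌊(n+1)·(24/25)⌋ = 4n. In particular, for n = 34 the sum equals 136 = 4·34, and for every positive integer m < 34 the corresponding sum differs from 4m. -/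
/-! Every term `⌊(n + 1)(aᵢ - 1)/aᵢ⌋` is a natural-number quotient, so the condition becomes a
decidable statement about natural numbers that is checked for `n = 34` and for all `n < 34`. -/

/-- The coefficient sum of `⌊(n + 1) Diff_E(0)⌋` for the exponents `a`. -/
def complementFloorSum (a : List ℕ) (n : ℕ) : ℕ :=
  (a.map fun ai => (n + 1) * (ai - 1) / ai).sum

theorem Rat.floor_natCast_mul_div_natCast (m p q : ℕ) :
    ⌊(m : ℚ) * (p / q)⌋ = ((m * p / q : ℕ) : ℤ) := by
  rw [← mul_div_assoc, ← Nat.cast_mul, Rat.floor_natCast_div_natCast, Int.natCast_div]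

theorem floor_sum_eq_complementFloorSum (n : ℕ) :
    ⌊((n : ℚ) + 1) * (1 / 2)⌋ + ⌊((n : ℚ) + 1) * (2 / 3)⌋ +
      ⌊((n : ℚ) + 1) * (10 / 11)⌋ + ⌊((n : ℚ) + 1) * (16 / 17)⌋ +
      ⌊((n : ℚ) + 1) * (24 / 25)⌋ = (complementFloorSum [2, 3, 11, 17, 25] n : ℤ) := by
  have h (p q : ℕ) := Rat.floor_natCast_mul_div_natCast (n + 1) p q
  have h₁ := h 1 2; have h₂ := h 2 3; have h₃ := h 10 11; have h₄ := h 16 17; have h₅ := h 24 25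
  simp only [Nat.cast_add, Nat.cast_ofNat, Nat.cast_one] at h₁ h₂ h₃ h₄ h₅
  rw [h₁, h₂, h₃, h₄, h₅]
  simp [complementFloorSum, add_assoc]

theorem complementFloorSum_ne_of_lt_34 :
    ∀ m, m < 34 → 0 < m → complementFloorSum [2, 3, 11, 17, 25] m ≠ 4 * m := by
  decide

theorem minimal_complement_index_14 :
    IsLeast {n : ℕ | 0 < n ∧
      ⌊((n : ℚ) + 1) * (1 / 2)⌋ + ⌊((n : ℚ) + 1) * (2 / 3)⌋ +
        ⌊((n : ℚ) + 1) * (10 / 11)⌋ + ⌊((n : ℚ) + 1) * (16 / 17)⌋ +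
        ⌊((n : ℚ) + 1) * (24 / 25)⌋ = 4 * (n : ℤ)} 34 := by
  simp only [floor_sum_eq_complementFloorSum]
  refine ⟨⟨by norm_num, by decide⟩, fun n ⟨hpos, h⟩ => ?_⟩
  by_contra! hlt
  exact complementFloorSum_ne_of_lt_34 n hlt hpos (by exact_mod_cast h)
end

section
/- The integer 34 is the least positive integer n such that ⌊(n+1)·(1/2)⌋ + ⌊(n+1)·(2/3)⌋ + ⌊(n+1)·(10/11)⌋ + ⌊(n+1)·(16/17)⌋ + ⌊(n+1)·(28/29)⌋ = 4n. In particular, for n = 34 the sum equals 136 = 4·34, and for every positive integer m < 34 the corresponding sum differs from 4m. -/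
/-! Writing `a = b + 1`, one has `⌊(n + 1) b / a⌋ = n - ⌊n / a⌋`, so with five exponents the
condition `Σ ⌊(n + 1)(aᵢ - 1)/aᵢ⌋ = 4n` becomes `⌊n/2⌋ + ⌊n/3⌋ + ⌊n/11⌋ + ⌊n/17⌋ + ⌊n/29⌋ = n`.
At `n = 34` this reads `17 + 11 + 3 + 2 + 1 = 34`, and a finite check shows that the left side
falls short of `n` for `0 < n < 34`. -/

theorem floor_succ_mul_pred_div (n : ℕ) {a b : ℕ} (hab : b + 1 = a) :
    ⌊((n : ℚ) + 1) * (b / a)⌋ = n - (n / a : ℕ) := by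
  have hn := Nat.div_add_mod n a
  have hr := Nat.mod_lt n (by omega : 0 < a)
  generalize n / a = q at hn ⊢
  generalize n % a = r at hn hr
  subst hab hn
  rw [Int.floor_eq_iff, ← mul_div_assoc, le_div_iff₀ (by positivity), div_lt_iff₀ (by positivity)]
  have hr : (r : ℚ) ≤ b := by exact_mod_cast Nat.lt_succ_iff.mp hr
  push_cast
  constructor <;> linarith

theorem minimal_complement_index_15 :
    IsLeast {n : ℕ | 0 < n ∧
      ⌊((n : ℚ) + 1) * (1 / 2)⌋ + ⌊((n : ℚ) + 1) * (2 / 3)⌋ +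
        ⌊((n : ℚ) + 1) * (10 / 11)⌋ + ⌊((n : ℚ) + 1) * (16 / 17)⌋ +
        ⌊((n : ℚ) + 1) * (28 / 29)⌋ = 4 * (n : ℤ)} 34 := by
  have h2 (n : ℕ) := floor_succ_mul_pred_div n (show 1 + 1 = 2 from rfl)
  have h3 (n : ℕ) := floor_succ_mul_pred_div n (show 2 + 1 = 3 from rfl)
  have h11 (n : ℕ) := floor_succ_mul_pred_div n (show 10 + 1 = 11 from rfl)
  have h17 (n : ℕ) := floor_succ_mul_pred_div n (show 16 + 1 = 17 from rfl)
  have h29 (n : ℕ) := floor_succ_mul_pred_div n (show 28 + 1 = 29 from rfl)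
  simp only [Nat.cast_ofNat, Nat.cast_one] at h2 h3 h11 h17 h29
  simp only [IsLeast, lowerBounds, Set.mem_ofPred_eq, h2, h3, h11, h17, h29]
  refine ⟨by norm_num, fun n ⟨hn, h⟩ => ?_⟩
  have hdiv : n / 2 + n / 3 + n / 11 + n / 17 + n / 29 = n := by omega
  by_contra! hlt
  exact (by decide : ∀ m < 34, 0 < m → m / 2 + m / 3 + m / 11 + m / 17 + m / 29 ≠ m) n hlt hn hdiv
end

section
/- The integer 28 is the least positive integer n such that ⌊(n+1)·(1/2)⌋ + ⌊(n+1)·(4/5)⌋ + ⌊(n+1)·(6/7)⌋ + ⌊(n+1)·(8/9)⌋ + ⌊(n+1)·(12/13)⌋ = 4n. In particular, for n = 28 the sum equals 112 = 4·28, and for every positive integer m < 28 the corresponding sum differs from 4m. -/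
/-!
For `a ≥ 1` and natural `n`, the floor `⌊(n + 1)(a - 1)/a⌋` of a rational number is the integer
quotient `(n + 1)(a - 1) / a`, so the condition defining the minimal complement index becomes a
statement about integer division, which is checked by evaluation for `n = 28` and each `n < 28`.
-/

theorem Rat.floor_intCast_mul_div (k p : ℤ) (q : ℕ) : ⌊(k : ℚ) * (p / q)⌋ = k * p / q := by
  rw [← mul_div_assoc, ← Int.cast_mul, Rat.floor_intCast_div_natCast]

theorem floor_add_one_mul_sub_one_div (n a : ℕ) :
    ⌊((n : ℚ) + 1) * ((a - 1) / a)⌋ = ((n : ℤ) + 1) * (a - 1) / a := by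
  exact_mod_cast Rat.floor_intCast_mul_div (n + 1) (a - 1) a

/-- `Σ_i ⌊(n + 1)(a_i - 1)/a_i⌋`, the degree of `⌊(n + 1) Diff_E(0)⌋` on `E = ℙ³`. -/
def diffFloorSum (a : List ℕ) (n : ℕ) : ℤ :=
  (a.map fun ai : ℕ => ((n : ℤ) + 1) * (ai - 1) / ai).sum

theorem floor_sum_eq_diffFloorSum (n : ℕ) :
    ⌊((n : ℚ) + 1) * (1 / 2)⌋ + ⌊((n : ℚ) + 1) * (4 / 5)⌋ + ⌊((n : ℚ) + 1) * (6 / 7)⌋ +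
      ⌊((n : ℚ) + 1) * (8 / 9)⌋ + ⌊((n : ℚ) + 1) * (12 / 13)⌋ =
      diffFloorSum [2, 5, 7, 9, 13] n := by
  have h₂ := floor_add_one_mul_sub_one_div n 2
  have h₅ := floor_add_one_mul_sub_one_div n 5
  have h₇ := floor_add_one_mul_sub_one_div n 7
  have h₉ := floor_add_one_mul_sub_one_div n 9
  have h₁₃ := floor_add_one_mul_sub_one_div n 13
  norm_num at h₂ h₅ h₇ h₉ h₁₃
  rw [h₂, h₅, h₇, h₉, h₁₃]
  norm_num [diffFloorSum, add_assoc]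

theorem diffFloorSum_ne_of_lt_28 : ∀ m < 28, 0 < m → diffFloorSum [2, 5, 7, 9, 13] m ≠ 4 * m := by
  decide

theorem minimal_complement_index_17 :
    IsLeast {n : ℕ | 0 < n ∧
      ⌊((n : ℚ) + 1) * (1 / 2)⌋ + ⌊((n : ℚ) + 1) * (4 / 5)⌋ +
        ⌊((n : ℚ) + 1) * (6 / 7)⌋ + ⌊((n : ℚ) + 1) * (8 / 9)⌋ +
        ⌊((n : ℚ) + 1) * (12 / 13)⌋ = 4 * (n : ℤ)} 28 := by
  simp only [floor_sum_eq_diffFloorSum]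
  refine ⟨⟨by norm_num, by decide⟩, fun n ⟨hn, h⟩ => ?_⟩
  by_contra! hlt
  exact diffFloorSum_ne_of_lt_28 n hlt hn h
end
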